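/- Let T be the ℵ₀-regular tree with fixed root e, and L : ℓ₁(T) → ℓ₁(T) the bounded operator with L(𝟙_s) = 𝟙_{ŝ} for s ≠ e and L(𝟙_e) = 0, where ŝ is the parent of s. Let N : ℓ₁(T) → ℓ_∞(T) be given by N(𝟙_s) = Σ_{t neighbour of s} 𝟙_t. Then L* + L = N as operators ℓ₁(T) → ℓ_∞(T), N commutes with λ(g) for every g ∈ Aut(T), and consequently λ(g)L − Lλ(g) = L*λ(g) − λ(g)L* on ℓ₁(T) for every g ∈ Aut(T). -/

import Mathlib

open scoped ENNReal

noncomputable section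

/-- The vertex set of the `ℵ₀`-regular tree, realised as the free group `F_∞`. -/
abbrev V : Type := FreeGroup ℕ

/-- The Cayley graph of `F_∞` with respect to its free generating set:
the `ℵ₀`-regular tree `T`. -/
def treeGraph : SimpleGraph V :=
  SimpleGraph.fromRel (fun s t => ∃ i : ℕ, t = s * FreeGroup.of i)

/-- The automorphism group `Aut(T)` of the `ℵ₀`-regular tree. -/
abbrev TreeAut := treeGraph ≃g treeGraph

/-- `ℓ_p(T)`. -/
abbrev lpT (p : ℝ≥0∞) := lp (fun _ : V => ℂ) p

lemma memℓp_comp {p : ℝ≥0∞} (g : V ≃ V) {x : V → ℂ} (h : Memℓp x p) :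
    Memℓp (fun v => x (g v)) p := by
  rcases ENNReal.trichotomy p with rfl | rfl | hp
  · rw [memℓp_zero_iff] at h ⊢
    exact Set.Finite.preimage g.injective.injOn h
  · rw [memℓp_infty_iff] at h ⊢
    apply h.mono
    rintro r ⟨v, rfl⟩
    exact ⟨g v, rfl⟩
  · apply memℓp_gen
    exact (g.summable_iff (f := fun v => ‖x v‖ ^ p.toReal)).2 ((memℓp_gen_iff hp).1 h)

/-- The shift representation of permutations of `T` on `ℂ^T`: `λ(g)x = x(g⁻¹ ·)`. -/
def lamFull (g : V ≃ V) : (V → ℂ) →ₗ[ℂ] (V → ℂ) where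
  toFun x := fun v => x (g.symm v)
  map_add' _ _ := rfl
  map_smul' _ _ := rfl

/-- The shift representation of permutations of `T` on `ℓ_p(T)`: `λ(g)x = x(g⁻¹ ·)`. -/
def lam (p : ℝ≥0∞) (g : V ≃ V) : lpT p →ₗ[ℂ] lpT p where
  toFun x := ⟨fun v => x (g.symm v), memℓp_comp g.symm (lp.memℓp x)⟩
  map_add' _ _ := rfl
  map_smul' _ _ := rfl

attribute [local instance] Classical.propDecidable

/-- The fixed root `e` of the tree. -/
def root : V := 1

/-- `ŝ`: the parent of the vertex `s`, i.e. the penultimate vertex on the geodesic from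
the root `e` to `s` (with `ê = e`), obtained by dropping the last letter of the reduced
word `s`. -/
def parent (s : V) : V := FreeGroup.mk s.toWord.dropLast

/-- The adjoint `L*` of the parent operator `L`, as an operator on `ℂ^T`:
`(L* y)(s) = y(ŝ)` for `s ≠ e` and `(L* y)(e) = 0`; equivalently `L*(𝟙_s) = Σ_{t̂ = s} 𝟙_t`. -/
def Lstar : (V → ℂ) →ₗ[ℂ] (V → ℂ) where
  toFun x := fun v => if v = root then 0 else x (parent v)
  map_add' x y := by
    funext v; by_cases h : v = root <;> simp [h]
  map_smul' c x := by
    funext v; by_cases h : v = root <;> simp [h]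

/-! The tree is the Cayley graph of `F_∞` and `ŝ` drops the last letter of the reduced word `s`,
so two vertices are adjacent iff one is a child of the other, and never both ways round. Hence
`(L* + L) 𝟙_s = Σ_{t̂ = s} 𝟙_t + 𝟙_ŝ = N 𝟙_s`, and `N λ(g) 𝟙_s = λ(g) N 𝟙_s` because `g` preserves
adjacency. All operators involved are continuous into `ℂ^T` with the product topology and the
`𝟙_s` span a dense subspace of `ℓ₁(T)`, so both identities hold on `ℓ₁(T)`. The commutation
relation follows by substituting `L = N - L*` on both sides. -/

namespace FreeGroup

variable {α : Type*} [DecidableEq α]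

theorem reduce_toWord_dropLast (x : FreeGroup α) : reduce x.toWord.dropLast = x.toWord.dropLast :=
  (isReduced_toWord.infix (List.dropLast_prefix _).isInfix).reduce_eq

theorem toWord_mul_of_eq_dropLast {x : FreeGroup α} {i : α}
    (h : x.toWord.getLast? = some (i, false)) : (x * of i).toWord = x.toWord.dropLast := by
  have hx : x.toWord.dropLast ++ [(i, false)] = x.toWord :=
    List.dropLast_append_getLast? _ h
  have hcancel : Red.Step (x.toWord.dropLast ++ [(i, false), (i, true)]) x.toWord.dropLast := by
    simpa using Red.Step.not (L₁ := x.toWord.dropLast) (L₂ := []) (x := i) (b := false)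
  rw [toWord_mul, toWord_of, ← hx, List.append_assoc, List.singleton_append,
    reduce.Step.eq hcancel, reduce_toWord_dropLast, List.dropLast_concat]

theorem toWord_mul_of_eq_append {x : FreeGroup α} {i : α}
    (h : x.toWord.getLast? ≠ some (i, false)) : (x * of i).toWord = x.toWord ++ [(i, true)] := by
  rw [toWord_mul, toWord_of, IsReduced.reduce_eq]
  refine isReduced_toWord.append IsReduced.singleton ?_
  rintro ⟨j, b⟩ hlast ⟨k, c⟩ hk rfl
  simp only [List.head?_cons, Option.mem_def, Option.some.injEq, Prod.mk.injEq] at hk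
  obtain ⟨rfl, rfl⟩ := hk
  cases b
  · exact absurd hlast h
  · rfl

end FreeGroup

open FreeGroup

lemma toWord_parent (v : V) : (parent v).toWord = v.toWord.dropLast := by
  rw [parent, toWord_mk, reduce_toWord_dropLast]

lemma parent_mul_mk_getLast (v : V) (hv : v.toWord ≠ []) :
    parent v * mk [v.toWord.getLast hv] = v := by
  rw [parent, mul_mk, List.dropLast_append_getLast, mk_toWord]

lemma length_toWord_parent_lt {v : V} (hv : v ≠ root) :
    (parent v).toWord.length < v.toWord.length := by
  have : v.toWord ≠ [] := toWord_eq_nil_iff.not.2 hv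
  rw [toWord_parent, List.length_dropLast]
  exact Nat.sub_lt (List.length_pos_of_ne_nil this) one_pos

def IsChild (t s : V) : Prop := t ≠ root ∧ parent t = s

lemma IsChild.not_isChild_symm {s t : V} (h : IsChild t s) : ¬ IsChild s t := by
  rintro ⟨hs, rfl⟩
  have := length_toWord_parent_lt hs
  have := h.2 ▸ length_toWord_parent_lt h.1
  omega

lemma isChild_or_isChild_mul_of (s : V) (i : ℕ) :
    IsChild (s * of i) s ∨ IsChild s (s * of i) := by
  by_cases hlast : s.toWord.getLast? = some (i, false)
  · right
    refine ⟨fun hs => by simp [hs, root] at hlast, toWord_injective ?_⟩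
    rw [toWord_parent, toWord_mul_of_eq_dropLast hlast]
  · left
    have hword := toWord_mul_of_eq_append hlast
    refine ⟨fun h => by simp [h, root] at hword, toWord_injective ?_⟩
    rw [toWord_parent, hword, List.dropLast_concat]

lemma treeGraph_adj_parent {v : V} (hv : v ≠ root) : treeGraph.Adj (parent v) v := by
  have hne : v.toWord ≠ [] := toWord_eq_nil_iff.not.2 hv
  have hv_eq := parent_mul_mk_getLast v hne
  refine (SimpleGraph.fromRel_adj _ _ _).2
    ⟨fun h => (length_toWord_parent_lt hv).ne (by rw [h]), ?_⟩
  generalize v.toWord.getLast hne = y at hv_eq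
  obtain ⟨i, _ | _⟩ := y
  · refine Or.inr ⟨i, ?_⟩
    have hinv : mk [(i, false)] = (of i)⁻¹ := by rw [of, inv_mk]; rfl
    calc parent v = parent v * (of i)⁻¹ * of i := (inv_mul_cancel_right _ _).symm
      _ = v * of i := by rw [← hinv, hv_eq]
  · exact Or.inl ⟨i, hv_eq.symm⟩

lemma treeGraph_adj_iff_isChild (s t : V) :
    treeGraph.Adj s t ↔ IsChild t s ∨ IsChild s t := by
  refine ⟨fun h => ?_, ?_⟩
  · obtain ⟨-, ⟨i, rfl⟩ | ⟨i, rfl⟩⟩ := (SimpleGraph.fromRel_adj _ _ _).1 h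
    · exact isChild_or_isChild_mul_of s i
    · exact (isChild_or_isChild_mul_of t i).symm
  · rintro (⟨ht, rfl⟩ | ⟨hs, rfl⟩)
    · exact treeGraph_adj_parent ht
    · exact (treeGraph_adj_parent hs).symm

lemma ite_treeGraph_adj_eq (s t : V) :
    (if treeGraph.Adj s t then (1 : ℂ) else 0) =
      (if IsChild t s then 1 else 0) + (if IsChild s t then 1 else 0) := by
  by_cases h : IsChild t s
  · simp [treeGraph_adj_iff_isChild, h, h.not_isChild_symm]
  · simp [treeGraph_adj_iff_isChild, h]

lemma Lstar_single_apply (s t : V) : Lstar (Pi.single s 1) t = if IsChild t s then 1 else 0 := by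
  by_cases ht : t = root <;> simp [Lstar, IsChild, ht, Pi.single_apply]

namespace lp

variable {α 𝕜 : Type*} [NormedRing 𝕜] {E : α → Type*} [∀ i, NormedAddCommGroup (E i)]
  [∀ i, Module 𝕜 (E i)] [∀ i, IsBoundedSMul 𝕜 (E i)]

variable (𝕜 E) in
def coeFnCLM (p : ℝ≥0∞) [Fact (1 ≤ p)] : lp E p →L[𝕜] ∀ i, E i where
  toFun := (↑)
  map_add' := coeFn_add
  map_smul' := coeFn_smul
  cont := uniformContinuous_coe.continuous

theorem ext_single_one [DecidableEq α] {F : Type*} [AddCommMonoid F] [Module 𝕜 F]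
    [TopologicalSpace F] [T2Space F] {p : ℝ≥0∞} [Fact (1 ≤ p)] (hp : p ≠ ⊤)
    {f g : lp (fun _ : α => 𝕜) p →L[𝕜] F}
    (h : ∀ i, f (lp.single p i 1) = g (lp.single p i 1)) : f = g :=
  ext_continuousLinearMap hp fun i => ContinuousLinearMap.ext_ring (h i)

end lp

lemma norm_lam {p : ℝ≥0∞} (hp : 0 < p.toReal) (g : V ≃ V) (x : lpT p) : ‖lam p g x‖ = ‖x‖ := by
  rw [lp.norm_eq_tsum_rpow hp, lp.norm_eq_tsum_rpow hp]
  exact congrArg (· ^ (1 / p.toReal)) (g.symm.tsum_eq fun v => ‖x v‖ ^ p.toReal)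

def lamCLM (g : V ≃ V) : lpT 1 →L[ℂ] lpT 1 :=
  (lam 1 g).mkContinuous 1 fun x => by rw [norm_lam (by simp), one_mul]

@[simp]
lemma coe_lam (p : ℝ≥0∞) (g : V ≃ V) (x : lpT p) : ⇑(lam p g x) = lamFull g x := rfl

lemma lam_single (g : V ≃ V) (s : V) :
    lam 1 g (lp.single 1 s 1) = lp.single 1 (g s) (1 : ℂ) := by
  ext v
  simp [lamFull, lp.single_apply, Pi.single_apply, Equiv.symm_apply_eq]

def LstarCLM : (V → ℂ) →L[ℂ] (V → ℂ) where
  toLinearMap := Lstar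
  cont := continuous_pi fun v => by
    by_cases hv : v = root
    · simpa [Lstar, hv] using continuous_const
    · simpa [Lstar, hv] using continuous_apply (parent v)

def lamFullCLM (g : V ≃ V) : (V → ℂ) →L[ℂ] (V → ℂ) where
  toLinearMap := lamFull g
  cont := continuous_pi fun v => continuous_apply (g.symm v)

lemma L_single_apply {L : lpT 1 →L[ℂ] lpT 1}
    (hL : ∀ s : V, s ≠ root → L (lp.single 1 s (1 : ℂ)) = lp.single 1 (parent s) (1 : ℂ))
    (hLe : L (lp.single 1 root (1 : ℂ)) = 0) (s t : V) :
    (L (lp.single 1 s 1) : V → ℂ) t = if IsChild s t then 1 else 0 := by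
  by_cases hs : s = root
  · simp [hs, hLe, IsChild]
  · simp [hL s hs, hs, IsChild, Pi.single_apply, eq_comm]

theorem LstarCLM_comp_add_comp_L_eq {L : lpT 1 →L[ℂ] lpT 1}
    (hL : ∀ s : V, s ≠ root → L (lp.single 1 s (1 : ℂ)) = lp.single 1 (parent s) (1 : ℂ))
    (hLe : L (lp.single 1 root (1 : ℂ)) = 0) {N : lpT 1 →L[ℂ] lpT ∞}
    (hN : ∀ s v : V, (N (lp.single 1 s (1 : ℂ)) : V → ℂ) v
      = if treeGraph.Adj s v then 1 else 0) :
    LstarCLM ∘L lp.coeFnCLM ℂ _ 1 + lp.coeFnCLM ℂ _ 1 ∘L L = lp.coeFnCLM ℂ _ ∞ ∘L N := by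
  refine lp.ext_single_one ENNReal.one_ne_top fun s => funext fun t => ?_
  change Lstar (lp.single 1 s 1 : V → ℂ) t + (L (lp.single 1 s 1) : V → ℂ) t
    = (N (lp.single 1 s 1) : V → ℂ) t
  rw [lp.coeFn_single, Lstar_single_apply, L_single_apply hL hLe, hN, ite_treeGraph_adj_eq]

theorem comp_lamCLM_eq_lamFullCLM_comp {N : lpT 1 →L[ℂ] lpT ∞}
    (hN : ∀ s v : V, (N (lp.single 1 s (1 : ℂ)) : V → ℂ) v
      = if treeGraph.Adj s v then 1 else 0) (g : TreeAut) :
    lp.coeFnCLM ℂ _ ∞ ∘L N ∘L lamCLM g.toEquiv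
      = lamFullCLM g.toEquiv ∘L lp.coeFnCLM ℂ _ ∞ ∘L N := by
  refine lp.ext_single_one ENNReal.one_ne_top fun s => funext fun t => ?_
  obtain ⟨u, rfl⟩ := g.toEquiv.surjective t
  change (N (lam 1 g.toEquiv (lp.single 1 s 1)) : V → ℂ) (g.toEquiv u)
    = (N (lp.single 1 s 1) : V → ℂ) (g.toEquiv.symm (g.toEquiv u))
  rw [lam_single, Equiv.symm_apply_apply, hN, hN]
  exact if_congr g.map_adj_iff rfl rfl

/-- Let `L : ℓ₁(T) → ℓ₁(T)` be the bounded operator with `L(𝟙_s) = 𝟙_{ŝ}` for `s ≠ e`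
and `L(𝟙_e) = 0`, and let `N : ℓ₁(T) → ℓ_∞(T)` be given by
`N(𝟙_s) = Σ_{t neighbour of s} 𝟙_t`.  Then `L* + L = N` as operators `ℓ₁(T) → ℓ_∞(T)`,
`N` commutes with `λ(g)` for every `g ∈ Aut(T)`, and consequently
`λ(g)L − Lλ(g) = L*λ(g) − λ(g)L*` on `ℓ₁(T)` for every `g ∈ Aut(T)`. -/
theorem Lstar_add_L_eq_N_and_commutation
    (L : lpT 1 →L[ℂ] lpT 1)
    (hL : ∀ s : V, s ≠ root → L (lp.single 1 s (1 : ℂ)) = lp.single 1 (parent s) (1 : ℂ))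
    (hLe : L (lp.single 1 root (1 : ℂ)) = 0)
    (N : lpT 1 →L[ℂ] lpT ∞)
    (hN : ∀ s v : V, (N (lp.single 1 s (1 : ℂ)) : V → ℂ) v
      = if treeGraph.Adj s v then 1 else 0) :
    (∀ x : lpT 1, Lstar (x : V → ℂ) + ((L x : lpT 1) : V → ℂ) = ((N x : lpT ∞) : V → ℂ)) ∧
    (∀ g : TreeAut, ∀ x : lpT 1,
      ((N (lam 1 g.toEquiv x) : lpT ∞) : V → ℂ)
        = lamFull g.toEquiv ((N x : lpT ∞) : V → ℂ)) ∧
    (∀ g : TreeAut, ∀ x : lpT 1,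
      lamFull g.toEquiv ((L x : lpT 1) : V → ℂ) - ((L (lam 1 g.toEquiv x) : lpT 1) : V → ℂ)
        = Lstar (lamFull g.toEquiv (x : V → ℂ)) - lamFull g.toEquiv (Lstar (x : V → ℂ))) := by
  have sum_eq (x : lpT 1) : Lstar (x : V → ℂ) + ((L x : lpT 1) : V → ℂ) = N x :=
    congr($(LstarCLM_comp_add_comp_L_eq hL hLe hN) x)
  have comm (g : TreeAut) (x : lpT 1) : ((N (lam 1 g.toEquiv x) : lpT ∞) : V → ℂ)
      = lamFull g.toEquiv ((N x : lpT ∞) : V → ℂ) :=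
    congr($(comp_lamCLM_eq_lamFullCLM_comp hN g) x)
  refine ⟨sum_eq, comm, fun g x => ?_⟩
  rw [eq_sub_of_add_eq' (sum_eq x), eq_sub_of_add_eq' (sum_eq (lam 1 g.toEquiv x)), map_sub,
    comm, coe_lam]
  abel
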